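/- Let n be a positive natural number, let σ : Fin n → ℝ with σ_i > 0 for all i, let α : Fin n → ℝ, and define ψ(p) = p − p·log(−p) for p ∈ [−1, 0). Consider the function F(p) = Σ_{i=1}^{n} σ_i² · ( (p_i/(2σ_i²))·α_i² − ψ(p_i) ) on the set of p : Fin n → ℝ with −1 ≤ p_i < 0 for all i. Then F(p) ≤ Σ_{i=1}^{n} σ_i² · exp(−α_i²/(2σ_i²)) for all such p, with equality if and only if p_i = −exp(−α_i²/(2σ_i²)) for every i. -/
import Mathlib


open Real Set Finset

lemma key_ineq (c q : ℝ) (hq : 0 < q) :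
    q - q * Real.log q - c * q ≤ Real.exp (-c) ∧
    (q - q * Real.log q - c * q = Real.exp (-c) ↔ q = Real.exp (-c)) := by
  set x : ℝ := -c - Real.log q with hx
  have hqx : q * Real.exp x = Real.exp (-c) := by
    rw [hx, Real.exp_sub, Real.exp_log hq]
    field_simp
  have hle : q * (x + 1) ≤ q * Real.exp x :=
    mul_le_mul_of_nonneg_left (Real.add_one_le_exp x) hq.le
  have hval : q * (x + 1) = q - q * Real.log q - c * q := by rw [hx]; ring
  have hiff : q = Real.exp (-c) ↔ x = 0 := by
    constructor
    · intro h; rw [hx, h, Real.log_exp]; ring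
    · intro h
      have : Real.log q = -c := by linarith [hx ▸ h]
      rw [← this, Real.exp_log hq]
  constructor
  · calc q - q * Real.log q - c * q = q * (x + 1) := hval.symm
      _ ≤ q * Real.exp x := hle
      _ = Real.exp (-c) := hqx
  · constructor
    · intro h
      by_contra hne
      have hx0 : x ≠ 0 := fun h0 => hne (hiff.mpr h0)
      have := Real.add_one_lt_exp hx0
      have hlt : q * (x + 1) < q * Real.exp x :=
        mul_lt_mul_of_pos_left this hq
      rw [hval, hqx] at hlt
      linarith
    · intro h
      have hx0 : x = 0 := hiff.mp h
      rw [← hval, hx0, ← hqx, hx0, Real.exp_zero]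
      ring

/-- Auxiliary-variable update (equations (16)–(17) of the paper): with weights
a_i = σ_i², the separable augmented correntropy objective over p ∈ [−1, 0)ⁿ is
bounded above by Σ σ_i² exp(−α_i²/(2σ_i²)), with equality exactly when
p_i = −exp(−α_i²/(2σ_i²)) for every i. -/
theorem auxiliary_variable_update
    (n : ℕ) (hn : 0 < n) (σ α : Fin n → ℝ) (hσ : ∀ i, 0 < σ i) :
    let ψ : ℝ → ℝ := fun p => p - p * Real.log (-p)
    let F : (Fin n → ℝ) → ℝ := fun p =>
      ∑ i, (σ i) ^ 2 * (p i / (2 * (σ i) ^ 2) * (α i) ^ 2 - ψ (p i))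
    ∀ p : Fin n → ℝ, (∀ i, p i ∈ Set.Ico (-1 : ℝ) 0) →
      F p ≤ ∑ i, (σ i) ^ 2 * Real.exp (-(α i) ^ 2 / (2 * (σ i) ^ 2)) ∧
      (F p = ∑ i, (σ i) ^ 2 * Real.exp (-(α i) ^ 2 / (2 * (σ i) ^ 2)) ↔
        ∀ i, p i = -Real.exp (-(α i) ^ 2 / (2 * (σ i) ^ 2))) := by
  intro ψ F p hp
  have hterm : ∀ i : Fin n,
      (σ i) ^ 2 * (p i / (2 * (σ i) ^ 2) * (α i) ^ 2 - ψ (p i)) ≤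
        (σ i) ^ 2 * Real.exp (-(α i) ^ 2 / (2 * (σ i) ^ 2)) ∧
      ((σ i) ^ 2 * (p i / (2 * (σ i) ^ 2) * (α i) ^ 2 - ψ (p i)) =
        (σ i) ^ 2 * Real.exp (-(α i) ^ 2 / (2 * (σ i) ^ 2)) ↔
        p i = -Real.exp (-(α i) ^ 2 / (2 * (σ i) ^ 2))) := by
    intro i
    have hσi : (0:ℝ) < (σ i) ^ 2 := pow_pos (hσ i) 2
    have hqi : 0 < -(p i) := by have := (hp i).2; linarith
    set c : ℝ := (α i) ^ 2 / (2 * (σ i) ^ 2) with hc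
    set q : ℝ := -(p i) with hq
    obtain ⟨hle, hiff⟩ := key_ineq c q hqi
    have hrw : p i / (2 * (σ i) ^ 2) * (α i) ^ 2 - ψ (p i) =
        q - q * Real.log q - c * q := by
      simp only [ψ, hq, hc]
      field_simp
      ring
    have hneg : -(α i) ^ 2 / (2 * (σ i) ^ 2) = -c := by rw [hc]; ring
    constructor
    · rw [hrw, hneg]
      exact mul_le_mul_of_nonneg_left hle hσi.le
    · rw [hrw, hneg]
      rw [mul_eq_mul_left_iff]
      constructor
      · rintro (h | h)
        · have := hiff.mp h
          rw [hq] at this; linarith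
        · exact absurd h hσi.ne'
      · intro h
        left
        apply hiff.mpr
        rw [hq, h]; ring
  refine ⟨Finset.sum_le_sum fun i _ => (hterm i).1, ?_⟩
  rw [Finset.sum_eq_sum_iff_of_le fun i _ => (hterm i).1]
  constructor
  · intro h i; exact (hterm i).2.mp (h i (Finset.mem_univ i))
  · intro h i _; exact (hterm i).2.mpr (h i)
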